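/- Let X and Y be Banach spaces and let H ⊆ L(X*, Y) be a closed subspace containing all operators x ⊗ y (x ∈ X, y ∈ Y), such that every T ∈ H is weak*-to-weakly continuous. If X is octahedral and there exists y ∈ S_Y with n(Y, y) = 1, then H is octahedral. -/

import Mathlib

open Filter Topology

noncomputable section

/-- A Banach space is octahedral (OH). -/
def IsOctahedral (Z : Type*) [NormedAddCommGroup Z] : Prop :=
  ∀ (n : ℕ) (z : Fin n → Z), (∀ i, ‖z i‖ = 1) → ∀ ε : ℝ, 0 < ε →
    ∃ w : Z, ‖w‖ = 1 ∧ ∀ i, ‖z i + w‖ > 2 - ε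

/-- Locally octahedral (LOH). -/
def IsLocallyOctahedral (Z : Type*) [NormedAddCommGroup Z] : Prop :=
  ∀ z : Z, ‖z‖ = 1 → ∀ ε : ℝ, 0 < ε →
    ∃ w : Z, ‖w‖ = 1 ∧ ‖z + w‖ > 2 - ε ∧ ‖z - w‖ > 2 - ε

/-- Weakly octahedral (WOH). -/
def IsWeaklyOctahedral (X : Type*) [NormedAddCommGroup X] [NormedSpace ℝ X] : Prop :=
  ∀ (n : ℕ) (z : Fin n → X), (∀ i, ‖z i‖ = 1) → ∀ f : X →L[ℝ] ℝ, ‖f‖ ≤ 1 →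
    ∀ ε : ℝ, 0 < ε → ∃ y : X, ‖y‖ = 1 ∧ ∀ i, ∀ t : ℝ, 0 < t →
      ‖z i + t • y‖ ≥ (1 - ε) * (|f (z i)| + t) ∧
      ‖z i - t • y‖ ≥ (1 - ε) * (|f (z i)| + t)

/-- Almost square (ASQ), sequential formulation. -/
def IsASQ (Z : Type*) [NormedAddCommGroup Z] : Prop :=
  ∀ (n : ℕ) (z : Fin n → Z), (∀ i, ‖z i‖ = 1) →
    ∃ w : ℕ → Z, (∀ k, ‖w k‖ ≤ 1) ∧
      Tendsto (fun k => ‖w k‖) atTop (nhds 1) ∧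
      ∀ i, Tendsto (fun k => ‖z i + w k‖) atTop (nhds 1) ∧
           Tendsto (fun k => ‖z i - w k‖) atTop (nhds 1)

/-- Almost square (ASQ), finite-ε formulation. -/
def IsASQeps (Z : Type*) [NormedAddCommGroup Z] : Prop :=
  ∀ (n : ℕ) (z : Fin n → Z), (∀ i, ‖z i‖ = 1) → ∀ ε : ℝ, 0 < ε →
    ∃ w : Z, ‖w‖ = 1 ∧ ∀ i, ‖z i + w‖ ≤ 1 + ε ∧ ‖z i - w‖ ≤ 1 + ε

/-- Locally almost square (LASQ), sequential formulation. -/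
def IsLASQ (Z : Type*) [NormedAddCommGroup Z] : Prop :=
  ∀ z : Z, ‖z‖ = 1 →
    ∃ w : ℕ → Z, (∀ k, ‖w k‖ ≤ 1) ∧
      Tendsto (fun k => ‖w k‖) atTop (nhds 1) ∧
      Tendsto (fun k => ‖z + w k‖) atTop (nhds 1) ∧
      Tendsto (fun k => ‖z - w k‖) atTop (nhds 1)

/-- Locally almost square (LASQ), ε formulation. -/
def IsLASQeps (Z : Type*) [NormedAddCommGroup Z] : Prop :=
  ∀ z : Z, ‖z‖ = 1 → ∀ ε : ℝ, 0 < ε →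
    ∃ w : Z, ‖w‖ = 1 ∧ ‖z + w‖ ≤ 1 + ε ∧ ‖z - w‖ ≤ 1 + ε

/-- Weakly almost square (WASQ). -/
def IsWASQ (Z : Type*) [NormedAddCommGroup Z] [NormedSpace ℝ Z] : Prop :=
  ∀ z : Z, ‖z‖ = 1 →
    ∃ w : ℕ → Z, (∀ k, ‖w k‖ ≤ 1) ∧
      Tendsto (fun k => ‖w k‖) atTop (nhds 1) ∧
      Tendsto (fun k => ‖z + w k‖) atTop (nhds 1) ∧
      Tendsto (fun k => ‖z - w k‖) atTop (nhds 1) ∧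
      ∀ f : Z →L[ℝ] ℝ, Tendsto (fun k => f (w k)) atTop (nhds 0)

/-- Local diameter two property: every slice of the unit ball has diameter two. -/
def HasLD2P (Z : Type*) [NormedAddCommGroup Z] [NormedSpace ℝ Z] : Prop :=
  ∀ f : Z →L[ℝ] ℝ, ‖f‖ = 1 → ∀ α : ℝ, 0 < α →
    Metric.diam {x : Z | ‖x‖ ≤ 1 ∧ 1 - α < f x} = 2

/-- Diameter two property: every nonempty relatively weakly open subset of the unit
ball has diameter two. -/
def HasD2P (Z : Type*) [NormedAddCommGroup Z] [NormedSpace ℝ Z] : Prop :=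
  ∀ U : Set Z, U.Nonempty → (∀ x ∈ U, ‖x‖ ≤ 1) →
    (∀ x ∈ U, ∃ (n : ℕ) (f : Fin n → Z →L[ℝ] ℝ) (δ : ℝ), 0 < δ ∧
      {y : Z | ‖y‖ ≤ 1 ∧ ∀ i, |f i y - f i x| < δ} ⊆ U) →
    Metric.diam U = 2

/-- The Schur property. -/
def HasSchurProperty (Z : Type*) [SeminormedAddCommGroup Z] [NormedSpace ℝ Z] : Prop :=
  ∀ (u : ℕ → Z) (x : Z),
    (∀ f : Z →L[ℝ] ℝ, Tendsto (fun k => f (u k)) atTop (nhds (f x))) →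
    Tendsto (fun k => ‖u k - x‖) atTop (nhds 0)

/-- The Dunford–Pettis property: every weakly compact operator is
weak-to-norm sequentially continuous. -/
def HasDPP (X : Type*) [NormedAddCommGroup X] [NormedSpace ℝ X] : Prop :=
  ∀ (Y : Type) (_ : NormedAddCommGroup Y) (_ : NormedSpace ℝ Y) (_ : CompleteSpace Y)
    (T : X →L[ℝ] Y),
    (∃ K : Set (WeakSpace ℝ Y), IsCompact K ∧
      ∀ x : X, ‖x‖ ≤ 1 → toWeakSpace ℝ Y (T x) ∈ K) →
    ∀ (u : ℕ → X) (x : X),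
      (∀ f : X →L[ℝ] ℝ, Tendsto (fun k => f (u k)) atTop (nhds (f x))) →
      Tendsto (fun k => ‖T (u k) - T x‖) atTop (nhds 0)

/-- `Z`, together with the bilinear-type map `t`, is (a realization of) the injective
tensor product `X ⊗̂_ε Y`: the span of elementary tensors is dense and the norm of any
linear combination of elementary tensors is given by the injective tensor norm. -/
def IsInjTensorProduct (X Y Z : Type*) [NormedAddCommGroup X] [NormedSpace ℝ X]
    [NormedAddCommGroup Y] [NormedSpace ℝ Y] [NormedAddCommGroup Z] [NormedSpace ℝ Z]
    (t : X → Y → Z) : Prop :=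
  (Submodule.span ℝ (Set.range fun p : X × Y => t p.1 p.2)).topologicalClosure = ⊤ ∧
  ∀ l : List (X × Y),
    ‖(l.map fun p => t p.1 p.2).sum‖ =
      sSup {s : ℝ | ∃ (f : X →L[ℝ] ℝ) (g : Y →L[ℝ] ℝ), ‖f‖ ≤ 1 ∧ ‖g‖ ≤ 1 ∧
        s = |(l.map fun p => f p.1 * g p.2).sum|}

/-- `Z`, together with the map `t`, is (a realization of) the projective tensor product
`X ⊗̂_π Y`: the span of elementary tensors is dense and the norm of any combination of
elementary tensors is the infimum of `Σ ‖xᵢ‖‖yᵢ‖` over all representations (two formal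
combinations represent the same tensor iff they agree against all pairs of functionals). -/
def IsProjTensorProduct (X Y Z : Type*) [NormedAddCommGroup X] [NormedSpace ℝ X]
    [NormedAddCommGroup Y] [NormedSpace ℝ Y] [NormedAddCommGroup Z] [NormedSpace ℝ Z]
    (t : X → Y → Z) : Prop :=
  (Submodule.span ℝ (Set.range fun p : X × Y => t p.1 p.2)).topologicalClosure = ⊤ ∧
  ∀ l : List (X × Y),
    ‖(l.map fun p => t p.1 p.2).sum‖ =
      sInf {s : ℝ | ∃ l' : List (X × Y),
        (∀ (f : X →L[ℝ] ℝ) (g : Y →L[ℝ] ℝ),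
          (l'.map fun p => f p.1 * g p.2).sum = (l.map fun p => f p.1 * g p.2).sum) ∧
        s = (l'.map fun p => ‖p.1‖ * ‖p.2‖).sum}

/-- `Z`, together with the diagonal map `δ : x ↦ x^N`, is (a realization of) the `N`-fold
injective symmetric tensor product `⊗̂_{ε,s,N} X`. -/
def IsInjSymTensorProduct (X : Type*) [NormedAddCommGroup X] [NormedSpace ℝ X] (N : ℕ)
    (Z : Type*) [NormedAddCommGroup Z] [NormedSpace ℝ Z] (δ : X → Z) : Prop :=
  (Submodule.span ℝ (Set.range δ)).topologicalClosure = ⊤ ∧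
  ∀ l : List (ℝ × X),
    ‖(l.map fun p => p.1 • δ p.2).sum‖ =
      sSup {s : ℝ | ∃ f : X →L[ℝ] ℝ, ‖f‖ ≤ 1 ∧
        s = |(l.map fun p => p.1 * (f p.2) ^ N).sum|}

/-- `Z`, together with the diagonal map `δ : x ↦ x^N`, is (a realization of) the `N`-fold
projective symmetric tensor product `⊗̂_{π,s,N} X`. -/
def IsProjSymTensorProduct (X : Type*) [NormedAddCommGroup X] [NormedSpace ℝ X] (N : ℕ)
    (Z : Type*) [NormedAddCommGroup Z] [NormedSpace ℝ Z] (δ : X → Z) : Prop :=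
  (Submodule.span ℝ (Set.range δ)).topologicalClosure = ⊤ ∧
  ∀ l : List (ℝ × X),
    ‖(l.map fun p => p.1 • δ p.2).sum‖ =
      sInf {s : ℝ | ∃ l' : List (ℝ × X),
        (∀ f : X →L[ℝ] ℝ,
          (l'.map fun p => p.1 * (f p.2) ^ N).sum = (l.map fun p => p.1 * (f p.2) ^ N).sum) ∧
        s = (l'.map fun p => |p.1| * ‖p.2‖ ^ N).sum}

/-- An operator `T : X* → Y` is weak*-to-weakly continuous. -/
def WeakStarToWeakContinuous {X Y : Type*} [NormedAddCommGroup X] [NormedSpace ℝ X]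
    [NormedAddCommGroup Y] [NormedSpace ℝ Y] (T : (X →L[ℝ] ℝ) →L[ℝ] Y) : Prop :=
  ∀ g : Y →L[ℝ] ℝ, Continuous fun f : WeakDual ℝ X => g (T f)

/-- The elementary tensor `x ⊗ y` regarded as the operator `x* ↦ x*(x) • y` in `L(X*, Y)`. -/
def elemTensor {X Y : Type*} [NormedAddCommGroup X] [NormedSpace ℝ X]
    [NormedAddCommGroup Y] [NormedSpace ℝ Y] (x : X) (y : Y) : (X →L[ℝ] ℝ) →L[ℝ] Y :=
  (ContinuousLinearMap.apply ℝ ℝ x).smulRight y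

/-- `n(Z, u) = 1`, i.e. `D(Z,u) = {f ∈ B_{Z*} : f(u) = 1}` is a norming set for `Z`. -/
def NormOneUnitary (Z : Type*) [NormedAddCommGroup Z] [NormedSpace ℝ Z] (u : Z) : Prop :=
  ‖u‖ = 1 ∧ ∀ z : Z, ‖z‖ ≤ sSup {r : ℝ | ∃ g : Z →L[ℝ] ℝ, ‖g‖ ≤ 1 ∧ g u = 1 ∧ r = |g z|}

/-- Asplund space: every closed separable subspace has separable dual. -/
def IsAsplund (Y : Type*) [NormedAddCommGroup Y] [NormedSpace ℝ Y] : Prop :=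
  ∀ S : Submodule ℝ Y, IsClosed (S : Set Y) → TopologicalSpace.SeparableSpace S →
    TopologicalSpace.SeparableSpace ((↥S) →L[ℝ] ℝ)

/-- The (metric) approximation-type property: finite-rank operators approximate the
identity uniformly on compact sets. -/
def HasAP (E : Type*) [NormedAddCommGroup E] [NormedSpace ℝ E] : Prop :=
  ∀ K : Set E, IsCompact K → ∀ ε : ℝ, 0 < ε →
    ∃ T : E →L[ℝ] E, FiniteDimensional ℝ (LinearMap.range (T : E →ₗ[ℝ] E)) ∧
      ∀ x ∈ K, ‖T x - x‖ ≤ ε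

end

/-! For each `Tᵢ` pick `gᵢ ∈ D(Y, y)` almost attaining the norm of `Tᵢ` at some point of `X*`;
since `gᵢ ∘ Tᵢ` is weak*-continuous it is evaluation at some `xᵢ ∈ X` with `‖xᵢ‖ ≈ 1`.
Octahedrality of `X` gives a unit vector `x₀` with `‖xᵢ + x₀‖ ≈ 2` for all `i`, and `x₀ ⊗ y`
is the required element of `H`: since `gᵢ (y) = 1`, the functional `gᵢ ∘ (Tᵢ + x₀ ⊗ y)` is
evaluation at `xᵢ + x₀`, whence `‖Tᵢ + x₀ ⊗ y‖ ≥ ‖xᵢ + x₀‖`. -/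

theorem exists_eq_apply_of_continuous_weakDual {𝕜 E : Type*} [NontriviallyNormedField 𝕜]
    [AddCommGroup E] [TopologicalSpace E] [Module 𝕜 E]
    (ψ : (E →L[𝕜] 𝕜) →ₗ[𝕜] 𝕜) (hψ : Continuous fun f : WeakDual 𝕜 E => ψ f) :
    ∃ x : E, ∀ f : E →L[𝕜] 𝕜, ψ f = f x := by
  obtain ⟨x, hx⟩ := LinearMap.dualEmbedding_surjective (topDualPairing 𝕜 E)
    (⟨ψ, hψ⟩ : StrongDual 𝕜 (WeakDual 𝕜 E))
  exact ⟨x, fun f => (DFunLike.congr_fun hx f).symm⟩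

theorem IsOctahedral.exists_norm_add_gt {X : Type*} [NormedAddCommGroup X] [NormedSpace ℝ X]
    (hX : IsOctahedral X) {n : ℕ} {x : Fin n → X} (hx0 : ∀ i, x i ≠ 0) (hx1 : ∀ i, ‖x i‖ ≤ 1)
    {ε : ℝ} (hε : 0 < ε) : ∃ w : X, ‖w‖ = 1 ∧ ∀ i, ‖x i‖ + 1 - ε < ‖x i + w‖ := by
  set z : Fin n → X := fun i => ‖x i‖⁻¹ • x i
  have hz : ∀ i, ‖z i‖ = 1 := fun i => norm_smul_inv_norm (hx0 i)
  obtain ⟨w, hw, hzw⟩ := hX n z hz ε hε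
  refine ⟨w, hw, fun i => ?_⟩
  have hdecomp : x i + w = (z i + w) - (1 - ‖x i‖) • z i := by
    rw [sub_smul, one_smul, smul_inv_smul₀ (norm_ne_zero_iff.2 (hx0 i))]
    abel
  calc ‖x i‖ + 1 - ε < ‖z i + w‖ - (1 - ‖x i‖) := by linarith [hzw i]
    _ = ‖z i + w‖ - ‖(1 - ‖x i‖) • z i‖ := by
      rw [norm_smul, hz, mul_one, Real.norm_of_nonneg (sub_nonneg.2 (hx1 i))]
    _ ≤ ‖x i + w‖ := hdecomp ▸ norm_sub_norm_le _ _

theorem NormOneUnitary.exists_lt_abs_apply {Y : Type*} [NormedAddCommGroup Y] [NormedSpace ℝ Y]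
    {y : Y} (hy : NormOneUnitary Y y) {z : Y} {r : ℝ} (hr : r < ‖z‖) :
    ∃ g : Y →L[ℝ] ℝ, ‖g‖ ≤ 1 ∧ g y = 1 ∧ r < |g z| := by
  obtain ⟨g₀, hg₀, hg₀y⟩ := exists_dual_vector ℝ y (by simp [hy.1])
  have hne : {r : ℝ | ∃ g : Y →L[ℝ] ℝ, ‖g‖ ≤ 1 ∧ g y = 1 ∧ r = |g z|}.Nonempty :=
    ⟨_, g₀, hg₀.le, by simp [hg₀y, hy.1], rfl⟩
  obtain ⟨_, ⟨g, hg, hgy, rfl⟩, hlt⟩ := exists_lt_of_lt_csSup hne (hr.trans_le (hy.2 z))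
  exact ⟨g, hg, hgy, hlt⟩

section Operators

variable {X Y : Type*} [NormedAddCommGroup X] [NormedSpace ℝ X]
  [NormedAddCommGroup Y] [NormedSpace ℝ Y]

theorem elemTensor_apply (x : X) (y : Y) (f : X →L[ℝ] ℝ) : elemTensor x y f = f x • y := rfl

theorem norm_elemTensor (x : X) (y : Y) : ‖elemTensor x y‖ = ‖x‖ * ‖y‖ := by
  rw [elemTensor, ContinuousLinearMap.norm_smulRight_apply]
  congr 1
  exact (NormedSpace.inclusionInDoubleDualLi ℝ).norm_map x

theorem norm_le_opNorm_of_comp_eq_apply {S : (X →L[ℝ] ℝ) →L[ℝ] Y} {g : Y →L[ℝ] ℝ}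
    (hg : ‖g‖ ≤ 1) {x : X} (hgS : ∀ f : X →L[ℝ] ℝ, g (S f) = f x) : ‖x‖ ≤ ‖S‖ := by
  refine NormedSpace.norm_le_dual_bound ℝ x (norm_nonneg S) fun f => ?_
  calc ‖f x‖ = ‖g (S f)‖ := by rw [hgS]
    _ ≤ ‖g‖ * (‖S‖ * ‖f‖) := (g.le_opNorm _).trans (by gcongr; exact S.le_opNorm f)
    _ ≤ ‖S‖ * ‖f‖ := mul_le_of_le_one_left (by positivity) hg

theorem exists_comp_eq_apply_of_lt_opNorm {T : (X →L[ℝ] ℝ) →L[ℝ] Y}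
    (hT : WeakStarToWeakContinuous T) {y : Y} (hy : NormOneUnitary Y y) {r : ℝ} (hr : r < ‖T‖) :
    ∃ (g : Y →L[ℝ] ℝ) (x : X), ‖g‖ ≤ 1 ∧ g y = 1 ∧ (∀ f, g (T f) = f x) ∧ r < ‖x‖ := by
  obtain ⟨φ, hφ, hTφ⟩ := T.exists_lt_apply_of_lt_opNorm hr
  obtain ⟨g, hg, hgy, hgTφ⟩ := hy.exists_lt_abs_apply hTφ
  obtain ⟨x, hx⟩ := exists_eq_apply_of_continuous_weakDual (g.comp T).toLinearMap (hT g)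
  refine ⟨g, x, hg, hgy, hx, ?_⟩
  calc r < |φ x| := hx φ ▸ hgTφ
    _ ≤ ‖φ‖ * ‖x‖ := φ.le_opNorm x
    _ ≤ ‖x‖ := mul_le_of_le_one_left (norm_nonneg x) hφ.le

end Operators

theorem statement2 (X Y : Type*) [NormedAddCommGroup X] [NormedSpace ℝ X]
    [NormedAddCommGroup Y] [NormedSpace ℝ Y]
    (H : Submodule ℝ ((X →L[ℝ] ℝ) →L[ℝ] Y))
    (htens : ∀ (x : X) (y : Y), elemTensor x y ∈ H)
    (hwstar : ∀ T ∈ H, WeakStarToWeakContinuous T)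
    (hX : IsOctahedral X) (y : Y) (hy : NormOneUnitary Y y) :
    @IsOctahedral ↥H (by exact @Submodule.normedAddCommGroup ℝ ((X →L[ℝ] ℝ) →L[ℝ] Y) _ _ _ H) := by
  intro n T hT ε hε
  have hr : max 0 (1 - ε / 2) < 1 := max_lt one_pos (by linarith)
  choose g x hg hgy hgT hx using fun i =>
    exists_comp_eq_apply_of_lt_opNorm (hwstar _ (T i).2) hy (hr.trans_eq (hT i).symm)
  have hx1 : ∀ i, ‖x i‖ ≤ 1 := fun i => hT i ▸ norm_le_opNorm_of_comp_eq_apply (hg i) (hgT i)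
  have hx0 : ∀ i, x i ≠ 0 := fun i => norm_pos_iff.1 ((le_max_left _ _).trans_lt (hx i))
  obtain ⟨x₀, hx₀, hxx₀⟩ := hX.exists_norm_add_gt hx0 hx1 (half_pos hε)
  refine ⟨⟨elemTensor x₀ y, htens x₀ y⟩,
    (norm_elemTensor x₀ y).trans (by rw [hx₀, hy.1, one_mul]), fun i => ?_⟩
  have hgsum : ∀ f, g i ((T i + elemTensor x₀ y) f) = f (x i + x₀) := fun f => by
    simp [elemTensor_apply, hgT, hgy]
  calc 2 - ε < ‖x i‖ + 1 - ε / 2 := by linarith [(le_max_right _ _).trans_lt (hx i)]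
    _ < ‖x i + x₀‖ := hxx₀ i
    _ ≤ _ := norm_le_opNorm_of_comp_eq_apply (hg i) hgsum
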